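/- Let T be a bounded linear operator on L² induced by a K⁰-kernel 𝐓 satisfying condition (iv), with subkernel operators Tₙ = PₙT. Suppose that ‖(T − Tₙ)Tₙᵐ‖ → 0 as n → ∞ for some m ∈ ℕ. Then for any complex sequence {βₙ} with βₙ → 0, ∇_s({βₙI + Tₙ}) = Π(T) \ {0} ⊆ ∇_b({βₙI + Tₙ}). -/

import Mathlib

open MeasureTheory Filter Topology ContinuousLinearMap
open scoped ENNReal NNReal

noncomputable section

/-- `L²(ℝ)`, the complex Hilbert space of square-integrable functions on `ℝ`. -/
abbrev L2 : Type := MeasureTheory.Lp ℂ 2 (MeasureTheory.volume : MeasureTheory.Measure ℝ)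

/-- Bounded linear operators on `L²`. -/
abbrev L2op : Type := L2 →L[ℂ] L2

/-- `T` is the integral operator induced by the kernel `K`:
`(Tf)(s) = ∫ K(s,t) f(t) dt` for every `f ∈ L²` and almost every `s`. -/
def IsInducedBy (T : L2op) (K : ℝ → ℝ → ℂ) : Prop :=
  ∀ f : L2, ∀ᵐ s : ℝ, (T f : ℝ → ℂ) s = ∫ t : ℝ, K s t * (f : ℝ → ℂ) t

/-- `K` is a `K⁰`-kernel with associated Carleman functions `kt`, `kt'`:
`kt s = conj (K s ·)` and `kt' s = K · s` as elements of `L²`, the kernel is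
continuous and vanishes at infinity, and both Carleman functions are continuous
and vanish at infinity in `L²`-norm. -/
structure IsK0Kernel (K : ℝ → ℝ → ℂ) (kt kt' : ℝ → L2) : Prop where
  repr_t : ∀ s : ℝ, (kt s : ℝ → ℂ) =ᵐ[volume] fun x => (starRingEnd ℂ) (K s x)
  repr_t' : ∀ s : ℝ, (kt' s : ℝ → ℂ) =ᵐ[volume] fun x => K x s
  cont : Continuous fun p : ℝ × ℝ => K p.1 p.2
  vanish : Tendsto (fun p : ℝ × ℝ => K p.1 p.2) (cocompact (ℝ × ℝ)) (𝓝 0)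
  cont_t : Continuous kt
  vanish_t : Tendsto kt (cocompact ℝ) (𝓝 0)
  cont_t' : Continuous kt'
  vanish_t' : Tendsto kt' (cocompact ℝ) (𝓝 0)

/-- The set `Π(T)` of regular values of `T`: those `λ` for which `I - λT` is invertible. -/
def regularSet (T : L2op) : Set ℂ := {lam : ℂ | IsUnit (1 - lam • T)}

/-- The resolvent `R_λ(T) = (I - λT)⁻¹` (junk value `0` if `λ ∉ Π(T)`). -/
def res (T : L2op) (lam : ℂ) : L2op := Ring.inverse (1 - lam • T)

/-- The Fredholm resolvent `T_{|λ} = T R_λ(T)`. -/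
def fres (T : L2op) (lam : ℂ) : L2op := T * res T lam

/-- The region of boundedness `∇_b({Sₙ})`. -/
def nablaB (S : ℕ → L2op) : Set ℂ :=
  {ζ : ℂ | ζ ≠ 0 ∧ ∃ M : ℝ, 0 < M ∧ ∃ N : ℕ, ∀ n > N,
      ζ ∈ regularSet (S n) ∧ ‖fres (S n) ζ‖ ≤ M}

/-- The region of strong convergence `∇_s({Sₙ})`: the `ζ ∈ ∇_b({Sₙ})` such that
the Fredholm resolvents `S_{n|ζ}` converge in the strong operator topology. -/
def nablaS (S : ℕ → L2op) : Set ℂ :=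
  {ζ : ℂ | ζ ∈ nablaB S ∧
    ∀ f : L2, ∃ g : L2, Tendsto (fun n => fres (S n) ζ f) atTop (𝓝 g)}

/-- Nuclear (trace class) operator on `L²`. -/
def IsNuclear (T : L2op) : Prop :=
  ∃ g h : ℕ → L2, Summable (fun k => ‖g k‖ * ‖h k‖) ∧
    ∀ f : L2, T f = ∑' k : ℕ, (inner ℂ f (g k) : ℂ) • h k

/-- The characteristic function `χ` of the interval `(-τ, τ)`, with complex values. -/
def chi (t : ℝ) (x : ℝ) : ℂ := Set.indicator (Set.Ioo (-t) t) 1 x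

/-- Condition (iv) for a `K⁰`-kernel `K` inducing `T`: the positive reals `τ n`
strictly increase to `+∞`, `P n` is the orthogonal projection given by multiplication
by `χₙ = chi (τ n)`, the subkernels `Kₙ(s,t) = χₙ(s)K(s,t)` and
`K̃ₙ(s,t) = χₙ(s)K(s,t)χₙ(t)` are `K⁰`-kernels, and the induced operators
`Tₙ = PₙT` and `T̃ₙ = PₙTPₙ` are nuclear. -/
structure ConditionIV (K : ℝ → ℝ → ℂ) (T : L2op) (tau : ℕ → ℝ) (P : ℕ → L2op) : Prop where
  pos : ∀ n, 0 < tau n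
  mono : StrictMono tau
  tendsto_top : Tendsto tau atTop atTop
  proj : ∀ n, ∀ f : L2, (P n f : ℝ → ℂ) =ᵐ[volume] fun x => chi (tau n) x * (f : ℝ → ℂ) x
  subker : ∀ n, ∃ kt kt' : ℝ → L2, IsK0Kernel (fun s t => chi (tau n) s * K s t) kt kt'
  subker' : ∀ n, ∃ kt kt' : ℝ → L2,
      IsK0Kernel (fun s t => chi (tau n) s * K s t * chi (tau n) t) kt kt'
  nuclear : ∀ n, IsNuclear (P n * T)
  nuclear' : ∀ n, IsNuclear (P n * T * P n)

/-- `λₙ(λ) = λ(1 - βₙλ)⁻¹`. -/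
def lamn (b : ℕ → ℂ) (lam : ℂ) (n : ℕ) : ℂ := lam * (1 - b n * lam)⁻¹

/-- The resolvent kernel for `K` at `λ` built from the resolvent Carleman function
`𝐭'_{|λ}(t) = R_λ(T)(kt' t)`:  `𝐓_{|λ}(s,t) = λ⟨𝐭'_{|λ}(t), 𝐭(s)⟩ + 𝐓(s,t)`
(the paper's inner product `⟨a,b⟩ = ∫ a conj b` is `inner b a` in Mathlib). -/
def resKer (T : L2op) (K : ℝ → ℝ → ℂ) (kt kt' : ℝ → L2) (lam : ℂ) (s t : ℝ) : ℂ :=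
  lam * (inner ℂ (kt s) (res T lam (kt' t)) : ℂ) + K s t

/-- The resolvent kernel for the subkernel `Kₙ` at `λ`:
`𝐓_{n|λ}(s,t) = λ χₙ(s) ⟨𝐭'_{n|λ}(t), 𝐭(s)⟩ + 𝐓ₙ(s,t)`, where
`𝐭'_{n|λ}(t) = R_λ(Tₙ) Pₙ (kt' t)` and `𝐓ₙ(s,t) = χₙ(s) 𝐓(s,t)`. -/
def resKerN (T : L2op) (K : ℝ → ℝ → ℂ) (kt kt' : ℝ → L2) (taun : ℝ) (Pn : L2op)
    (lam : ℂ) (s t : ℝ) : ℂ :=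
  lam * chi taun s * (inner ℂ (kt s) (res (Pn * T) lam (Pn (kt' t))) : ℂ) + chi taun s * K s t

/-- `R` is a resolvent kernel for the `K⁰`-kernel `K` at `λ` (Definition 2 of the paper):
`R` is a `K⁰`-kernel satisfying the two simultaneous integral equations and the
square-integrability condition. -/
def IsResolventKernel (K : ℝ → ℝ → ℂ) (lam : ℂ) (R : ℝ → ℝ → ℂ) : Prop :=
  (∃ rt rt' : ℝ → L2, IsK0Kernel R rt rt') ∧
  (∀ s t : ℝ, R s t - lam * ∫ x : ℝ, K s x * R x t = K s t) ∧
  (∀ s t : ℝ, R s t - lam * ∫ x : ℝ, R s x * K x t = K s t) ∧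
  (∀ f : L2, ∫⁻ s : ℝ, ((‖∫ t : ℝ, R s t * (f : ℝ → ℂ) t‖₊ : ℝ≥0) : ℝ≥0∞) ^ 2 < ⊤)

/-!
Write `Sₙ = βₙ I + Tₙ`. As `τₙ → ∞`, `Pₙ → I` strongly, so `Sₙ → T` strongly and, by
Banach–Steinhaus, the `Sₙ` are uniformly bounded.

If the Fredholm resolvents `S_{n|ζ}` converge strongly, so do the resolvents
`R_ζ(Sₙ) = I + ζ S_{n|ζ}`, and their strong limit is a two-sided inverse of `I - ζT`.

Conversely let `λ ∈ Π(T)`. Then `I - λSₙ = (1 - βₙλ)(I - λₙTₙ)` with `λₙ = λ(1 - βₙλ)⁻¹ → λ`, and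
with `r = R_{λₙ}(T)` one has
`(∑_{j<m} (λₙTₙ)^j + r (λₙTₙ)^m)(I - λₙTₙ) = I + r λₙ^(m+1) (T - Tₙ) Tₙ^m`,
whose error term tends to `0` in norm. Hence `I - λₙTₙ` has uniformly bounded left inverses; being a
compact perturbation of the identity (`Tₙ` is nuclear) it is invertible by the Fredholm alternative.
Uniformly bounded resolvents together with `Sₙ → T` strongly give `R_λ(Sₙ) → R_λ(T)` strongly.
-/

open Asymptotics

section StrongConvergence

variable {𝕜 E F : Type*} [NontriviallyNormedField 𝕜] [NormedAddCommGroup E] [NormedSpace 𝕜 E]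
  [NormedAddCommGroup F] [NormedSpace 𝕜 F]

theorem tendsto_apply_zero_of_isBigO {ι : Type*} {l : Filter ι} {A : ι → E →L[𝕜] F} {v : ι → E}
    (hA : A =O[l] fun _ => (1 : ℝ)) (hv : Tendsto v l (𝓝 0)) :
    Tendsto (fun i => A i (v i)) l (𝓝 0) := by
  obtain ⟨c, hc⟩ := hA.bound
  refine IsBigO.trans_tendsto (IsBigO.of_bound c ?_) hv
  filter_upwards [hc] with i hi
  simpa using (A i).le_of_opNorm_le (by simpa using hi) (v i)

theorem tendsto_ringInverse_apply {U : ℕ → E →L[𝕜] E} {U' : E →L[𝕜] E}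
    (hU : ∀ f, Tendsto (fun n => U n f) atTop (𝓝 (U' f))) (hU' : IsUnit U')
    (hunit : ∀ᶠ n in atTop, IsUnit (U n))
    (hbdd : (fun n => Ring.inverse (U n)) =O[atTop] fun _ => (1 : ℝ)) (f : E) :
    Tendsto (fun n => Ring.inverse (U n) f) atTop (𝓝 (Ring.inverse U' f)) := by
  set g := Ring.inverse U' f
  have hdiff := tendsto_apply_zero_of_isBigO (v := fun n => U' g - U n g) hbdd
    (by simpa using (tendsto_sub_nhds_zero_iff.2 (hU g)).neg)
  refine tendsto_sub_nhds_zero_iff.1 (hdiff.congr' ?_)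
  filter_upwards [hunit] with n hn
  -- `U n⁻¹ f - g = U n⁻¹ (U' g - U n g)`, because `U' g = f`
  have hUg : U' g = f := by
    simpa using DFunLike.congr_fun (Ring.mul_inverse_cancel _ hU') f
  have hUn : Ring.inverse (U n) (U n g) = g := by
    simpa using DFunLike.congr_fun (Ring.inverse_mul_cancel _ hn) g
  rw [map_sub, hUn, hUg]

variable [CompleteSpace E]

theorem isBigO_one_of_tendsto_pointwise {S : ℕ → E →L[𝕜] F} {T : E →L[𝕜] F}
    (hS : ∀ f, Tendsto (fun n => S n f) atTop (𝓝 (T f))) : S =O[atTop] fun _ => (1 : ℝ) := by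
  obtain ⟨C, hC⟩ := banach_steinhaus fun f => by
    obtain ⟨C, hC⟩ := isBounded_iff_forall_norm_le.1 (Metric.isBounded_range_of_tendsto _ (hS f))
    exact ⟨C, fun n => hC _ ⟨n, rfl⟩⟩
  exact IsBigO.of_bound C (Eventually.of_forall fun n => by simpa using hC n)

theorem tendsto_apply_of_tendsto_pointwise {S : ℕ → E →L[𝕜] F} {T : E →L[𝕜] F} {v : ℕ → E} {y : E}
    (hS : ∀ f, Tendsto (fun n => S n f) atTop (𝓝 (T f))) (hv : Tendsto v atTop (𝓝 y)) :
    Tendsto (fun n => S n (v n)) atTop (𝓝 (T y)) := by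
  have hdiff := tendsto_apply_zero_of_isBigO (isBigO_one_of_tendsto_pointwise hS)
    (tendsto_sub_nhds_zero_iff.2 hv)
  simpa using hdiff.add (hS y)

theorem mul_eq_one_of_tendsto_pointwise {U V : ℕ → E →L[𝕜] E} {U' V' : E →L[𝕜] E}
    (hU : ∀ f, Tendsto (fun n => U n f) atTop (𝓝 (U' f)))
    (hV : ∀ f, Tendsto (fun n => V n f) atTop (𝓝 (V' f)))
    (h : ∀ᶠ n in atTop, U n * V n = 1) : U' * V' = 1 :=
  ContinuousLinearMap.ext fun f => by
    have hf : Tendsto (fun n => U n (V n f)) atTop (𝓝 f) := tendsto_const_nhds.congr'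
      (h.mono fun n hn => by simpa using (DFunLike.congr_fun hn f).symm)
    exact (tendsto_nhds_unique (tendsto_apply_of_tendsto_pointwise hU (hV f)) hf : U' (V' f) = f)

end StrongConvergence

theorem sum_pow_add_mul_pow_mul_one_sub {A : Type*} [Ring A] {α β r : A} (hr : r * (1 - α) = 1)
    (m : ℕ) :
    (∑ j ∈ Finset.range m, β ^ j + r * β ^ m) * (1 - β) = 1 + r * ((α - β) * β ^ m) := by
  have hrα : r * α = r - 1 := by rw [← hr, mul_sub, mul_one, sub_sub_cancel]
  rw [add_mul, geom_sum_mul_neg, mul_assoc, mul_sub, mul_one, ← pow_succ, sub_mul, mul_sub r,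
    mul_sub r, ← mul_assoc r α, hrα, ← pow_succ', sub_mul, one_mul]
  abel

theorem exists_isBigO_mul_one_sub_eq_one {ι A : Type*} [NormedRing A] [HasSummableGeomSeries A]
    {l : Filter ι} {α β : ι → A} (m : ℕ) (hα : ∀ᶠ i in l, IsUnit (1 - α i))
    (hr : (fun i => Ring.inverse (1 - α i)) =O[l] fun _ => (1 : ℝ))
    (hβ : β =O[l] fun _ => (1 : ℝ)) (hαβ : Tendsto (fun i => (α i - β i) * β i ^ m) l (𝓝 0)) :
    ∃ L : ι → A, (L =O[l] fun _ => (1 : ℝ)) ∧ ∀ᶠ i in l, L i * (1 - β i) = 1 := by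
  set r := fun i => Ring.inverse (1 - α i)
  set E := fun i => r i * ((α i - β i) * β i ^ m)
  have hE : Tendsto (fun i => 1 + E i) l (𝓝 1) := by
    have h0 : Tendsto E l (𝓝 0) :=
      (isLittleO_one_iff ℝ).1 (by simpa using hr.mul_isLittleO ((isLittleO_one_iff ℝ).2 hαβ))
    simpa using (tendsto_const_nhds (x := (1 : A))).add h0
  have hinv : Tendsto (fun i => Ring.inverse (1 + E i)) l (𝓝 1) := by
    have h1 := (NormedRing.inverse_continuousAt (1 : Aˣ)).tendsto
    rw [Units.val_one, Ring.inverse_one] at h1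
    exact h1.comp hE
  have hunit : ∀ᶠ i in l, IsUnit (1 + E i) := hE.eventually (Units.isOpen.mem_nhds ⟨1, rfl⟩)
  have hpow (j : ℕ) : (fun i => β i ^ j) =O[l] fun _ => (1 : ℝ) := by simpa using hβ.pow j
  have hB : (fun i => ∑ j ∈ Finset.range m, β i ^ j + r i * β i ^ m) =O[l] fun _ => (1 : ℝ) := by
    refine IsBigO.add ?_ (by simpa using hr.mul (hpow m))
    simpa [Finset.sum_fn] using IsBigO.sum fun j (_ : j ∈ Finset.range m) => hpow j
  refine ⟨fun i => Ring.inverse (1 + E i) * (∑ j ∈ Finset.range m, β i ^ j + r i * β i ^ m),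
    by simpa using (hinv.isBigO_one ℝ).mul hB, ?_⟩
  filter_upwards [hα, hunit] with i hαi hEi
  rw [mul_assoc, sum_pow_add_mul_pow_mul_one_sub (Ring.inverse_mul_cancel _ hαi),
    Ring.inverse_mul_cancel _ hEi]

section Perturbation

variable {𝕜 A : Type*} [Field 𝕜] [Ring A] [Algebra 𝕜 A]

theorem isUnit_smul_and_ringInverse_smul {c : 𝕜} (hc : c ≠ 0) {x : A} (hx : IsUnit x) :
    IsUnit (c • x) ∧ Ring.inverse (c • x) = c⁻¹ • Ring.inverse x := by
  let u : Aˣ := ⟨c • x, c⁻¹ • Ring.inverse x,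
    by rw [smul_mul_smul_comm, mul_inv_cancel₀ hc, Ring.mul_inverse_cancel _ hx, one_smul],
    by rw [smul_mul_smul_comm, inv_mul_cancel₀ hc, Ring.inverse_mul_cancel _ hx, one_smul]⟩
  exact ⟨u.isUnit, Ring.inverse_unit u⟩

theorem one_sub_smul_smul_one_add {b z : 𝕜} (h : 1 - b * z ≠ 0) (X : A) :
    1 - z • (b • 1 + X) = (1 - b * z) • (1 - (z * (1 - b * z)⁻¹) • X) := by
  rw [smul_sub, smul_smul, mul_left_comm, mul_inv_cancel₀ h, mul_one, sub_smul, one_smul,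
    smul_add, smul_smul, mul_comm z b]
  abel

end Perturbation

theorem isUnit_one_sub_of_isCompactOperator_of_mul_eq_one {𝕜 E : Type*}
    [NontriviallyNormedField 𝕜] [NormedAddCommGroup E] [NormedSpace 𝕜 E] [CompleteSpace E]
    {N L : E →L[𝕜] E} (hN : IsCompactOperator N) (hL : L * (1 - N) = 1) : IsUnit (1 - N) := by
  have hinj : Function.Injective (1 - N : E →L[𝕜] E) :=
    Function.LeftInverse.injective (g := L) fun x => by simpa using DFunLike.congr_fun hL x
  rcases hN.hasEigenvalue_or_mem_resolventSet one_ne_zero with h | h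
  · obtain ⟨x, hx, hx0⟩ := h.exists_hasEigenvector
    refine absurd (hinj (a₁ := x) (a₂ := 0) ?_) hx0
    simpa [sub_eq_zero] using (Module.End.mem_eigenspace_iff.1 hx).symm
  · simpa [spectrum.mem_resolventSet_iff] using h

theorem isCompactOperator_of_eq_tsum_inner {𝕜 E F : Type*} [RCLike 𝕜] [NormedAddCommGroup E]
    [InnerProductSpace 𝕜 E] [NormedAddCommGroup F] [NormedSpace 𝕜 F] [CompleteSpace F]
    {N : E → F} {g : ℕ → E} {h : ℕ → F} (hs : Summable fun k => ‖g k‖ * ‖h k‖)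
    (hN : ∀ f, N f = ∑' k, (inner 𝕜 f (g k) : 𝕜) • h k) : IsCompactOperator N := by
  -- each term `f ↦ ⟪f, g k⟫ • h k` is conjugate-linear, so the series is summed in `E →L⋆[𝕜] F`
  set r : ℕ → E →L⋆[𝕜] F := fun k => (ContinuousLinearMap.toSpanSingleton 𝕜 (h k)).comp
    (innerSLFlip 𝕜 (g k))
  have hr : Summable r := by
    refine Summable.of_norm_bounded hs fun k => ?_
    calc ‖r k‖ ≤ ‖h k‖ * ‖innerSLFlip 𝕜 (g k)‖ := by
          simpa using (ContinuousLinearMap.toSpanSingleton 𝕜 (h k)).opNorm_comp_le _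
      _ ≤ ‖h k‖ * ‖g k‖ := by
          gcongr
          exact ContinuousLinearMap.opNorm_le_bound _ (norm_nonneg _) fun y => by
            simpa [mul_comm] using norm_inner_le_norm (𝕜 := 𝕜) y (g k)
      _ = ‖g k‖ * ‖h k‖ := mul_comm _ _
  have hcpt : ∑' k, r k ∈ compactOperator (starRingEnd 𝕜) E F :=
    tsum_mem isClosed_setOfPred_isCompactOperator fun k =>
      (isCompactOperator_of_locallyCompactSpace_dom (innerSLFlip 𝕜 (g k))).clm_comp
        (ContinuousLinearMap.toSpanSingleton 𝕜 (h k))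
  have hNr : N = ⇑(∑' k, r k) := funext fun f => by
    rw [hN, ← ContinuousLinearMap.apply_apply' (σ₁₂ := starRingEnd 𝕜) f,
      ContinuousLinearMap.map_tsum _ hr]
    simp [r]
  exact hNr ▸ hcpt

theorem tendsto_eLpNorm_indicator_compl {α E : Type*} [MeasurableSpace α] {μ : Measure α}
    [NormedAddCommGroup E] {p : ℝ≥0∞} (hp0 : p ≠ 0) (hp : p ≠ ∞) {f : α → E} (hf : MemLp f p μ)
    {s : ℕ → Set α} (hs : ∀ n, MeasurableSet (s n)) (hcov : ∀ x, ∀ᶠ n in atTop, x ∈ s n) :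
    Tendsto (fun n => eLpNorm ((s n)ᶜ.indicator f) p μ) atTop (𝓝 0) := by
  have hp' : 0 < p.toReal := ENNReal.toReal_pos hp0 hp
  have hbound (n : ℕ) :
      ∀ᵐ x ∂μ, ‖(s n)ᶜ.indicator f x‖ₑ ^ p.toReal ≤ ‖f x‖ₑ ^ p.toReal :=
    Eventually.of_forall fun x => by
      by_cases hx : x ∈ (s n)ᶜ <;> simp [hx, ENNReal.zero_rpow_of_pos hp']
  have hpt : ∀ᵐ x ∂μ, Tendsto (fun n => ‖(s n)ᶜ.indicator f x‖ₑ ^ p.toReal) atTop (𝓝 0) :=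
    Eventually.of_forall fun x => tendsto_const_nhds.congr' <| by
      filter_upwards [hcov x] with n hn
      simp [hn, ENNReal.zero_rpow_of_pos hp']
  have hlim := tendsto_lintegral_of_dominated_convergence' _
    (fun n => (hf.1.indicator (hs n).compl).enorm.pow_const _) hbound
    (lintegral_rpow_enorm_lt_top_of_eLpNorm_lt_top hp0 hp hf.2).ne hpt
  rw [lintegral_zero] at hlim
  have := (ENNReal.continuous_rpow_const (y := 1 / p.toReal)).tendsto 0 |>.comp hlim
  rw [ENNReal.zero_rpow_of_pos (one_div_pos.2 hp')] at this
  simp only [eLpNorm_eq_lintegral_rpow_enorm_toReal hp0 hp]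
  exact this

theorem tendsto_apply_of_ae_eq_chi_mul {tau : ℕ → ℝ} {P : ℕ → L2op}
    (hP : ∀ n f, (P n f : ℝ → ℂ) =ᵐ[volume] fun x => chi (tau n) x * (f : ℝ → ℂ) x)
    (htau : Tendsto tau atTop atTop) (f : L2) : Tendsto (fun n => P n f) atTop (𝓝 f) := by
  have hdiff (n : ℕ) : ((P n f - f : L2) : ℝ → ℂ) =ᵐ[volume]
      -((Set.Ioo (-tau n) (tau n))ᶜ.indicator (f : ℝ → ℂ)) := by
    filter_upwards [Lp.coeFn_sub (P n f) f, hP n f] with x h1 h2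
    rw [h1, Pi.sub_apply, h2]
    by_cases hx : x ∈ Set.Ioo (-tau n) (tau n) <;> simp [chi, hx]
  have hcov (x : ℝ) : ∀ᶠ n in atTop, x ∈ Set.Ioo (-tau n) (tau n) := by
    filter_upwards [htau.eventually_gt_atTop |x|] with n hn
    exact abs_lt.1 hn
  rw [tendsto_iff_norm_sub_tendsto_zero]
  simp_rw [Lp.norm_def, eLpNorm_congr_ae (hdiff _), eLpNorm_neg]
  exact (ENNReal.tendsto_toReal ENNReal.zero_ne_top).comp
    (tendsto_eLpNorm_indicator_compl two_ne_zero ENNReal.ofNat_ne_top (Lp.memLp f)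
      (fun _ => measurableSet_Ioo) hcov)

theorem one_add_smul_fres {S : L2op} {z : ℂ} (h : z ∈ regularSet S) :
    1 + z • fres S z = res S z := by
  rw [fres, res, ← smul_mul_assoc]
  nth_rewrite 1 [← Ring.mul_inverse_cancel _ h]
  rw [sub_mul, one_mul, sub_add_cancel]

theorem tendsto_one_sub_smul_apply {S : ℕ → L2op} {T : L2op}
    (hS : ∀ f, Tendsto (fun n => S n f) atTop (𝓝 (T f))) (z : ℂ) (f : L2) :
    Tendsto (fun n => (1 - z • S n) f) atTop (𝓝 ((1 - z • T) f)) := by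
  simpa using tendsto_const_nhds.sub ((hS f).const_smul z)

theorem mem_regularSet_of_mem_nablaS {S : ℕ → L2op} {T : L2op}
    (hS : ∀ f, Tendsto (fun n => S n f) atTop (𝓝 (T f))) {z : ℂ} (hz : z ∈ nablaS S) :
    z ∈ regularSet T := by
  obtain ⟨⟨-, _, _, N, hN⟩, hconv⟩ := hz
  have hreg : ∀ᶠ n in atTop, z ∈ regularSet (S n) :=
    eventually_atTop.2 ⟨N + 1, fun n hn => (hN n hn).1⟩
  choose g hg using hconv
  have hres : Tendsto (fun n f => res (S n) z f) atTop (𝓝 fun f => f + z • g f) :=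
    tendsto_pi_nhds.2 fun f => (tendsto_const_nhds.add ((hg f).const_smul z)).congr'
      (hreg.mono fun n hn => by simp [← one_add_smul_fres hn])
  set V : L2op := continuousLinearMapOfTendsto _ hres
  have hV : ∀ f, Tendsto (fun n => res (S n) z f) atTop (𝓝 (V f)) := tendsto_pi_nhds.1 hres
  have hU := tendsto_one_sub_smul_apply hS z
  exact ⟨⟨_, V,
    mul_eq_one_of_tendsto_pointwise hU hV (hreg.mono fun n hn => Ring.mul_inverse_cancel _ hn),
    mul_eq_one_of_tendsto_pointwise hV hU (hreg.mono fun n hn => Ring.inverse_mul_cancel _ hn)⟩,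
    rfl⟩

theorem tendsto_fres_apply {S : ℕ → L2op} {T : L2op}
    (hS : ∀ f, Tendsto (fun n => S n f) atTop (𝓝 (T f))) {z : ℂ} (hz : z ∈ regularSet T)
    (hreg : ∀ᶠ n in atTop, z ∈ regularSet (S n))
    (hbdd : (fun n => res (S n) z) =O[atTop] fun _ => (1 : ℝ)) (f : L2) :
    Tendsto (fun n => fres (S n) z f) atTop (𝓝 (fres T z f)) :=
  tendsto_apply_of_tendsto_pointwise (S := S) (T := T) hS
    (tendsto_ringInverse_apply (tendsto_one_sub_smul_apply hS z) hz hreg hbdd f)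

theorem mem_nablaB_of_isBigO {S : ℕ → L2op} {z : ℂ} (hz : z ≠ 0)
    (hreg : ∀ᶠ n in atTop, z ∈ regularSet (S n))
    (hbdd : (fun n => fres (S n) z) =O[atTop] fun _ => (1 : ℝ)) : z ∈ nablaB S := by
  obtain ⟨c, hc⟩ := hbdd.bound
  obtain ⟨N, hN⟩ := eventually_atTop.1 (hreg.and hc)
  refine ⟨hz, max c 1, by positivity, N, fun n hn => ⟨(hN n hn.le).1, ?_⟩⟩
  have hle := (hN n hn.le).2
  rw [norm_one, mul_one] at hle
  exact hle.trans (le_max_left _ _)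

theorem IsNuclear.isCompactOperator {N : L2op} (h : IsNuclear N) : IsCompactOperator N := by
  obtain ⟨g, e, hs, hN⟩ := h
  exact isCompactOperator_of_eq_tsum_inner hs hN

theorem eventually_mem_regularSet_and_isBigO_res {T : L2op} {Tn : ℕ → L2op} {b : ℕ → ℂ} {m : ℕ}
    (hTn : Tn =O[atTop] fun _ => (1 : ℝ)) (hcpt : ∀ n, IsCompactOperator (Tn n))
    (hconv : Tendsto (fun n => ‖(T - Tn n) * Tn n ^ m‖) atTop (𝓝 0))
    (hb : Tendsto b atTop (𝓝 0)) {z : ℂ} (hz : z ∈ regularSet T) :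
    (∀ᶠ n in atTop, z ∈ regularSet (b n • 1 + Tn n)) ∧
      (fun n => res (b n • 1 + Tn n) z) =O[atTop] fun _ => (1 : ℝ) := by
  set μ := lamn b z
  have hc : Tendsto (fun n => 1 - b n * z) atTop (𝓝 1) := by
    simpa using tendsto_const_nhds.sub (hb.mul_const z)
  have hμ : Tendsto μ atTop (𝓝 z) := by
    have := (hc.inv₀ one_ne_zero).const_mul z
    rwa [inv_one, mul_one] at this
  have hα : Tendsto (fun n => 1 - μ n • T) atTop (𝓝 (1 - z • T)) :=
    tendsto_const_nhds.sub (hμ.smul_const T)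
  have hr : (fun n => Ring.inverse (1 - μ n • T)) =O[atTop] fun _ => (1 : ℝ) := by
    have := (NormedRing.inverse_continuousAt hz.unit).tendsto
    rw [hz.unit_spec] at this
    exact (this.comp hα).isBigO_one ℝ
  have hβ : (fun n => μ n • Tn n) =O[atTop] fun _ => (1 : ℝ) := by
    simpa using (hμ.isBigO_one ℝ).smul hTn
  -- `(μ T - μ Tₙ)(μ Tₙ)^m = μ^(m+1) (T - Tₙ) Tₙ^m`
  have hαβ : Tendsto (fun n => (μ n • T - μ n • Tn n) * (μ n • Tn n) ^ m) atTop (𝓝 0) := by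
    have := (hμ.pow (m + 1)).smul (tendsto_zero_iff_norm_tendsto_zero.2 hconv)
    rw [smul_zero] at this
    refine this.congr fun n => ?_
    rw [← smul_sub, smul_pow, smul_mul_smul_comm, ← pow_succ']
  obtain ⟨L, hL, hLβ⟩ := exists_isBigO_mul_one_sub_eq_one m
    (hα.eventually (Units.isOpen.mem_nhds hz)) hr hβ hαβ
  have hres : ∀ᶠ n in atTop, z ∈ regularSet (b n • 1 + Tn n) ∧
      res (b n • 1 + Tn n) z = (1 - b n * z)⁻¹ • L n := by
    filter_upwards [hLβ, hc.eventually_ne one_ne_zero] with n hLn hcn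
    have hu := isUnit_one_sub_of_isCompactOperator_of_mul_eq_one ((hcpt n).smul (μ n)) hLn
    have hfac : 1 - z • (b n • 1 + Tn n) = (1 - b n * z) • (1 - μ n • Tn n) :=
      one_sub_smul_smul_one_add hcn (Tn n)
    have hinv : Ring.inverse (1 - μ n • Tn n) = L n := by
      simpa using ((Ring.eq_mul_inverse_iff_mul_eq _ _ _ hu).2 hLn).symm
    obtain ⟨hunit, hsmul⟩ := isUnit_smul_and_ringInverse_smul hcn hu
    exact ⟨show IsUnit (1 - z • (b n • 1 + Tn n)) from hfac ▸ hunit, by rw [res, hfac, hsmul, hinv]⟩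
  refine ⟨hres.mono fun n hn => hn.1, ?_⟩
  refine IsBigO.congr' (by simpa using ((hc.inv₀ one_ne_zero).isBigO_one ℝ).smul hL)
    (hres.mono fun n hn => hn.2.symm) EventuallyEq.rfl

theorem statement9_general (T : L2op) (K : ℝ → ℝ → ℂ)
    (tau : ℕ → ℝ) (P : ℕ → L2op) (hiv : ConditionIV K T tau P)
    (m : ℕ)
    (hconv : Tendsto (fun n => ‖(T - P n * T) * (P n * T) ^ m‖) atTop (𝓝 (0 : ℝ)))
    (b : ℕ → ℂ) (hb : Tendsto b atTop (𝓝 (0 : ℂ))) :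
    nablaS (fun n => b n • (1 : L2op) + P n * T) = regularSet T \ {0} ∧
    regularSet T \ {0} ⊆ nablaB (fun n => b n • (1 : L2op) + P n * T) := by
  set S := fun n => b n • (1 : L2op) + P n * T
  have hP := tendsto_apply_of_ae_eq_chi_mul hiv.proj hiv.tendsto_top
  have hS (f : L2) : Tendsto (fun n => S n f) atTop (𝓝 (T f)) := by
    simpa [S] using (hb.smul_const f).add (hP (T f))
  have hres (z : ℂ) (hz : z ∈ regularSet T) := eventually_mem_regularSet_and_isBigO_res
    (isBigO_one_of_tendsto_pointwise fun f => hP (T f)) (fun n => (hiv.nuclear n).isCompactOperator)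
    hconv hb hz
  have hB : regularSet T \ {0} ⊆ nablaB S := fun z ⟨hz, hz0⟩ =>
    mem_nablaB_of_isBigO hz0 (hres z hz).1
      (by simpa [fres] using (isBigO_one_of_tendsto_pointwise hS).mul (hres z hz).2)
  refine ⟨Set.Subset.antisymm (fun z hz => ⟨mem_regularSet_of_mem_nablaS hS hz, hz.1.1⟩)
    fun z hz => ⟨hB hz, fun f => ⟨_, tendsto_fres_apply hS hz.1 (hres z hz.1).1 (hres z hz.1).2 f⟩⟩,
    hB⟩

theorem statement9 (T : L2op) (K : ℝ → ℝ → ℂ) (kt kt' : ℝ → L2)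
    (hK : IsK0Kernel K kt kt') (hT : IsInducedBy T K)
    (tau : ℕ → ℝ) (P : ℕ → L2op) (hiv : ConditionIV K T tau P)
    (m : ℕ) (hm : 1 ≤ m)
    (hconv : Tendsto (fun n => ‖(T - P n * T) * (P n * T) ^ m‖) atTop (𝓝 (0 : ℝ)))
    (b : ℕ → ℂ) (hb : Tendsto b atTop (𝓝 (0 : ℂ))) :
    nablaS (fun n => b n • (1 : L2op) + P n * T) = regularSet T \ {0} ∧
    regularSet T \ {0} ⊆ nablaB (fun n => b n • (1 : L2op) + P n * T) :=
  statement9_general T K tau P hiv m hconv b hb
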